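/- arXiv:2308.11089 — 2 statements merged into one kernel-verified Lean document; each statement's English description precedes it below -/
import Mathlib

section
/- Kronecker-product additivity with one pure factor: let α = |ψ⟩⟨ψ| be a pure k-UDA state on ⊗_{i=1}^n H_{A_i} and β a k-UDA state on ⊗_{i=1}^n H_{B_i}. Regard α ⊗_K β as an n-partite state on ⊗_{i=1}^n (H_{A_i} ⊗ H_{B_i}) with i-th party (A_i B_i). Then α ⊗_K β is k-UDA with respect to this n-party structure: any density operator on ⊗_{i=1}^n (H_{A_i} ⊗ H_{B_i}) sharing all k-partite marginals (over the combined parties (A_i B_i)) of α ⊗_K β equals α ⊗_K β. -/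
open scoped BigOperators ComplexOrder

abbrev Idx {ι : Type} (κ : ι → Type) : Type := ∀ i, κ i

def IsDensity {α : Type} [Fintype α] (M : Matrix α α ℂ) : Prop :=
  M.PosSemidef ∧ M.trace = 1

def pureState {α : Type} (ψ : α → ℂ) : Matrix α α ℂ :=
  fun a b => ψ a * star (ψ b)

noncomputable def ptrace {ι : Type} [Fintype ι] [DecidableEq ι] (κ : ι → Type)
    [∀ i, Fintype (κ i)] (S : Finset ι) (M : Matrix (Idx κ) (Idx κ) ℂ) :
    Matrix (∀ i : {i // i ∈ S}, κ i) (∀ i : {i // i ∈ S}, κ i) ℂ :=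
  fun a b => ∑ c : ∀ i : {i // i ∉ S}, κ i,
    M (fun i => if h : i ∈ S then a ⟨i, h⟩ else c ⟨i, h⟩)
      (fun i => if h : i ∈ S then b ⟨i, h⟩ else c ⟨i, h⟩)

def IsUDA {ι : Type} [Fintype ι] [DecidableEq ι] (κ : ι → Type)
    [∀ i, Fintype (κ i)] (k : ℕ) (ρ : Matrix (Idx κ) (Idx κ) ℂ) : Prop :=
  ∀ σ : Matrix (Idx κ) (Idx κ) ℂ, IsDensity σ →
    (∀ S : Finset ι, S.card = k → ptrace κ S σ = ptrace κ S ρ) → σ = ρ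

def kronProd {ι : Type} {κA κB : ι → Type}
    (ρ : Matrix (Idx κA) (Idx κA) ℂ) (σ : Matrix (Idx κB) (Idx κB) ℂ) :
    Matrix (Idx fun i => κA i × κB i) (Idx fun i => κA i × κB i) ℂ :=
  fun a b => ρ (fun i => (a i).1) (fun i => (b i).1) *
             σ (fun i => (a i).2) (fun i => (b i).2)

/-!
Tracing out all the `B` parties of `σ` commutes with taking `k`-party marginals, and sends
`|ψ⟩⟨ψ| ⊗_K β` to `|ψ⟩⟨ψ|`; so the `A`-reduced state of `σ` has the `k`-marginals of `|ψ⟩⟨ψ|`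
and equals it by uniqueness. A positive semidefinite operator whose reduced state is pure
factorizes: `σ = |ψ⟩⟨ψ| ⊗ τ` with `τ = (⟨ψ| ⊗ 1) σ (|ψ⟩ ⊗ 1)` again a density operator.
Marginals of Kronecker products are Kronecker products of marginals, and those of `|ψ⟩⟨ψ|` have
trace one, so `τ` has the `k`-marginals of `β` and therefore equals `β`.
-/

open Matrix
open scoped Kronecker

lemma Equiv.sum_eq_sum_sum_symm {α β γ M : Type*} [Fintype α] [Fintype β] [Fintype γ]
    [AddCommMonoid M] (e : α ≃ β × γ) (f : α → M) :
    ∑ x, f x = ∑ b, ∑ c, f (e.symm (b, c)) := by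
  rw [← Fintype.sum_prod_type', e.symm.sum_comp]

namespace Matrix

lemma trace_submatrix_equiv {m n R : Type*} [Fintype m] [Fintype n] [AddCommMonoid R]
    (M : Matrix n n R) (e : m ≃ n) : (M.submatrix e e).trace = M.trace :=
  e.sum_comp fun i => M i i

lemma PosSemidef.mul_eq_zero_of_conjTranspose_mul_mul_eq_zero {α β 𝕜 : Type*} [Fintype α]
    [RCLike 𝕜] {A : Matrix α α 𝕜} (hA : A.PosSemidef) {B : Matrix α β 𝕜}
    (h : Bᴴ * A * B = 0) : A * B = 0 := by
  ext i j
  have hj : star (fun k => B k j) ⬝ᵥ A *ᵥ (fun k => B k j) = 0 := by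
    have hjj := congrFun (congrFun h j) j
    simp only [mul_apply, conjTranspose_apply, Finset.sum_mul, zero_apply] at hjj
    rw [Finset.sum_comm] at hjj
    simpa [dotProduct, mulVec, Finset.mul_sum, mul_assoc] using hjj
  simpa [mul_apply, mulVec, dotProduct] using congrFun ((hA.dotProduct_mulVec_zero_iff _).mp hj) i

section TraceRight

variable {α β R : Type*} [Fintype β]

def traceRight [AddCommMonoid R] (M : Matrix (α × β) (α × β) R) : Matrix α α R :=
  of fun a a' => ∑ b, M (a, b) (a', b)

lemma trace_traceRight [Fintype α] [AddCommMonoid R] (M : Matrix (α × β) (α × β) R) :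
    M.traceRight.trace = M.trace := by
  simp [trace, traceRight, Fintype.sum_prod_type]

lemma traceRight_kronecker [CommSemiring R] (A : Matrix α α R) (B : Matrix β β R) :
    (A ⊗ₖ B).traceRight = B.trace • A := by
  ext a a'
  simp [traceRight, trace, Finset.mul_sum, mul_comm]

lemma traceRight_eq_sum_submatrix [AddCommMonoid R] (M : Matrix (α × β) (α × β) R) :
    M.traceRight = ∑ b, M.submatrix (·, b) (·, b) := by
  ext a a'
  simp [traceRight, sum_apply]

lemma PosSemidef.traceRight [Ring R] [PartialOrder R] [StarRing R] [AddLeftMono R]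
    {M : Matrix (α × β) (α × β) R} (hM : M.PosSemidef) : M.traceRight.PosSemidef := by
  rw [traceRight_eq_sum_submatrix]
  exact posSemidef_sum _ fun b _ => hM.submatrix _

end TraceRight

section PureFactor

variable {α β : Type} [Fintype β] [DecidableEq β]

variable (β) in
def ketTensorOne (ψ : α → ℂ) : Matrix (α × β) β ℂ :=
  of fun p b => ψ p.1 * (1 : Matrix β β ℂ) p.2 b

omit [Fintype β] [DecidableEq β] in
lemma pureState_eq_vecMulVec (ψ : α → ℂ) : pureState ψ = vecMulVec ψ (star ψ) := rfl

omit [Fintype β] [DecidableEq β] in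
lemma dotProduct_pureState_mulVec [Fintype α] {ψ : α → ℂ} (hψ : ψ ⬝ᵥ star ψ = 1) :
    star ψ ⬝ᵥ pureState ψ *ᵥ ψ = 1 := by
  have hψ' : star ψ ⬝ᵥ ψ = 1 := by rw [dotProduct_comm, hψ]
  simp [pureState_eq_vecMulVec, vecMulVec_mulVec, hψ']

lemma ketTensorOne_mul_mul_conjTranspose (ψ : α → ℂ) (X : Matrix β β ℂ) :
    ketTensorOne β ψ * X * (ketTensorOne β ψ)ᴴ = pureState ψ ⊗ₖ X := by
  ext ⟨a, b⟩ ⟨a', b'⟩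
  simp [ketTensorOne, pureState, mul_apply, one_apply, apply_ite (starRingEnd ℂ)]
  ring

lemma conjTranspose_ketTensorOne_mul_self [Fintype α] {ψ : α → ℂ} (hψ : ψ ⬝ᵥ star ψ = 1) :
    (ketTensorOne β ψ)ᴴ * ketTensorOne β ψ = 1 := by
  ext b b'
  have hψ' : ∑ a, starRingEnd ℂ (ψ a) * ψ a = 1 := by rw [← hψ, dotProduct_comm]; rfl
  simp [ketTensorOne, mul_apply, one_apply, Fintype.sum_prod_type, apply_ite (starRingEnd ℂ), hψ',
    eq_comm]

lemma trace_conjTranspose_ketTensorOne_mul_mul [Fintype α] (ψ : α → ℂ)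
    (M : Matrix (α × β) (α × β) ℂ) :
    ((ketTensorOne β ψ)ᴴ * M * ketTensorOne β ψ).trace = star ψ ⬝ᵥ M.traceRight *ᵥ ψ := by
  simp [ketTensorOne, trace, mul_apply, one_apply, Fintype.sum_prod_type, traceRight, dotProduct,
    mulVec, apply_ite (starRingEnd ℂ), ite_mul, Finset.mul_sum, Finset.sum_mul, mul_assoc]
  rw [Finset.sum_comm]
  simp_rw [Finset.sum_comm (s := (Finset.univ : Finset β))]
  rw [Finset.sum_comm]

theorem PosSemidef.eq_pureState_kronecker [Fintype α] [DecidableEq α]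
    {M : Matrix (α × β) (α × β) ℂ} (hM : M.PosSemidef) {ψ : α → ℂ} (hψ : ψ ⬝ᵥ star ψ = 1)
    (h : M.traceRight = pureState ψ) :
    M = pureState ψ ⊗ₖ ((ketTensorOne β ψ)ᴴ * M * ketTensorOne β ψ) := by
  set V := ketTensorOne β ψ
  have hV : Vᴴ * V = 1 := conjTranspose_ketTensorOne_mul_self hψ
  set Q := 1 - V * Vᴴ
  have hQ : Qᴴ = Q := by simp [Q, conjTranspose_sub, conjTranspose_mul]
  have hQQ : Q * Q = Q := by
    simp only [Q, Matrix.sub_mul, Matrix.mul_sub, Matrix.one_mul, Matrix.mul_one,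
      Matrix.mul_assoc, ← Matrix.mul_assoc Vᴴ, hV]
    abel
  -- `tr (Q M Q) = tr M - ⟨ψ| M_A |ψ⟩ = 1 - 1`
  have htr : (Qᴴ * M * Q).trace = 0 := by
    rw [hQ, trace_mul_cycle, hQQ, Matrix.sub_mul, Matrix.one_mul, trace_sub, Matrix.mul_assoc,
      trace_mul_comm, ← trace_traceRight, h, trace_conjTranspose_ketTensorOne_mul_mul, h,
      dotProduct_pureState_mulVec hψ]
    exact sub_eq_zero.mpr hψ
  have hMQ : M * Q = 0 := hM.mul_eq_zero_of_conjTranspose_mul_mul_eq_zero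
    ((hM.conjTranspose_mul_mul_same Q).trace_eq_zero_iff.mp htr)
  have hright : M * (V * Vᴴ) = M := by
    rw [← sub_eq_zero, ← neg_eq_zero, neg_sub, ← hMQ, Matrix.mul_sub, Matrix.mul_one]
  have hleft : V * Vᴴ * M = M := by
    simpa [conjTranspose_mul, hM.1.eq] using congrArg (·ᴴ) hright
  calc M = V * Vᴴ * M * (V * Vᴴ) := by rw [hleft, hright]
    _ = V * (Vᴴ * M * V) * Vᴴ := by simp only [Matrix.mul_assoc]
    _ = _ := ketTensorOne_mul_mul_conjTranspose ψ _

end PureFactor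

end Matrix

section Parties

variable {ι : Type} [Fintype ι] [DecidableEq ι]

lemma ptrace_eq_traceRight (κ : ι → Type) [∀ i, Fintype (κ i)] (S : Finset ι)
    (M : Matrix (Idx κ) (Idx κ) ℂ) :
    ptrace κ S M = (M.submatrix (Equiv.piEquivPiSubtypeProd (· ∈ S) κ).symm
      (Equiv.piEquivPiSubtypeProd (· ∈ S) κ).symm).traceRight := rfl

lemma trace_ptrace (κ : ι → Type) [∀ i, Fintype (κ i)] (S : Finset ι)
    (M : Matrix (Idx κ) (Idx κ) ℂ) : (ptrace κ S M).trace = M.trace := by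
  rw [ptrace_eq_traceRight, trace_traceRight, trace_submatrix_equiv]

variable {κA κB : ι → Type} [∀ i, Fintype (κA i)] [∀ i, Fintype (κB i)]

omit [Fintype ι] [DecidableEq ι] [∀ i, Fintype (κA i)] [∀ i, Fintype (κB i)] in
lemma kronProd_eq_submatrix (ρ : Matrix (Idx κA) (Idx κA) ℂ) (μ : Matrix (Idx κB) (Idx κB) ℂ) :
    kronProd ρ μ = (ρ ⊗ₖ μ).submatrix (Equiv.arrowProdEquivProdArrow ι κA κB)
      (Equiv.arrowProdEquivProdArrow ι κA κB) := rfl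

omit [Fintype ι] [DecidableEq ι] [∀ i, Fintype (κA i)] [∀ i, Fintype (κB i)] in
lemma kronProd_right_injective {ρ : Matrix (Idx κA) (Idx κA) ℂ} (hρ : ρ ≠ 0) :
    Function.Injective (kronProd (κB := κB) ρ) := by
  intro μ ν h
  obtain ⟨a, a', ha⟩ : ∃ a a', ρ a a' ≠ 0 := by
    by_contra! h0
    exact hρ (ext h0)
  ext b b'
  exact mul_left_cancel₀ ha (congrFun (congrFun h fun i => (a i, b i)) fun i => (a' i, b' i))

lemma ptrace_kronProd (S : Finset ι) (ρ : Matrix (Idx κA) (Idx κA) ℂ)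
    (μ : Matrix (Idx κB) (Idx κB) ℂ) :
    ptrace (fun i => κA i × κB i) S (kronProd ρ μ) =
      kronProd (ptrace κA S ρ) (ptrace κB S μ) := by
  ext a b
  simp only [ptrace, kronProd, Finset.sum_mul_sum]
  rw [← (Equiv.arrowProdEquivProdArrow _ _ _).symm.sum_comp, Fintype.sum_prod_type]
  simp only [apply_dite Prod.fst, apply_dite Prod.snd]
  rfl

omit [∀ i, Fintype (κA i)] in
noncomputable def traceB (M : Matrix (Idx fun i => κA i × κB i) (Idx fun i => κA i × κB i) ℂ) :
    Matrix (Idx κA) (Idx κA) ℂ :=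
  (M.submatrix (Equiv.arrowProdEquivProdArrow ι κA κB).symm
    (Equiv.arrowProdEquivProdArrow ι κA κB).symm).traceRight

omit [∀ i, Fintype (κA i)] in
lemma traceB_kronProd (ρ : Matrix (Idx κA) (Idx κA) ℂ) (μ : Matrix (Idx κB) (Idx κB) ℂ) :
    traceB (kronProd ρ μ) = μ.trace • ρ :=
  traceRight_kronecker ρ μ

lemma IsDensity.traceB {M : Matrix (Idx fun i => κA i × κB i) (Idx fun i => κA i × κB i) ℂ}
    (hM : IsDensity M) : IsDensity (traceB M) :=
  ⟨(hM.1.submatrix _).traceRight, by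
    rw [_root_.traceB, trace_traceRight, trace_submatrix_equiv, hM.2]⟩

lemma ptrace_traceB (S : Finset ι)
    (M : Matrix (Idx fun i => κA i × κB i) (Idx fun i => κA i × κB i) ℂ) :
    ptrace κA S (traceB M) = traceB (ptrace (fun i => κA i × κB i) S M) := by
  ext a a'
  simp only [ptrace, traceB, traceRight, submatrix_apply, of_apply,
    (Equiv.piEquivPiSubtypeProd (· ∈ S) κB).sum_eq_sum_sum_symm,
    (Equiv.arrowProdEquivProdArrow {i // i ∉ S} (κA ·) (κB ·)).sum_eq_sum_sum_symm]
  rw [Finset.sum_comm]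
  refine Finset.sum_congr rfl fun _ _ => Finset.sum_congr rfl fun _ _ =>
    Finset.sum_congr rfl fun _ _ => ?_
  congr 1 <;> funext i <;> by_cases h : i ∈ S <;> simp [h]

lemma exists_eq_kronProd_of_traceB_eq_pureState
    {σ : Matrix (Idx fun i => κA i × κB i) (Idx fun i => κA i × κB i) ℂ} (hσ : IsDensity σ)
    {ψ : Idx κA → ℂ} (hψ : ψ ⬝ᵥ star ψ = 1) (h : traceB σ = pureState ψ) :
    ∃ τ, IsDensity τ ∧ σ = kronProd (pureState ψ) τ := by
  classical
  set e := Equiv.arrowProdEquivProdArrow ι κA κB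
  have hM : (σ.submatrix e.symm e.symm).PosSemidef := hσ.1.submatrix _
  set τ := (ketTensorOne (Idx κB) ψ)ᴴ * σ.submatrix e.symm e.symm * ketTensorOne (Idx κB) ψ
  have hfac : σ = kronProd (pureState ψ) τ :=
    congrArg (submatrix · e e) (hM.eq_pureState_kronecker hψ h)
  refine ⟨τ, ⟨hM.conjTranspose_mul_mul_same _, ?_⟩, hfac⟩
  rw [← hσ.2, hfac, kronProd_eq_submatrix, trace_submatrix_equiv, trace_kronecker,
    show (pureState ψ).trace = 1 from hψ, one_mul]

end Parties

theorem kronecker_additivity_pure_factor {n : ℕ}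
    (κA κB : Fin n → Type) [∀ i, Fintype (κA i)] [∀ i, Fintype (κB i)] (k : ℕ)
    (ψ : Idx κA → ℂ) (hψ : ∑ a, ψ a * star (ψ a) = 1)
    (hαUDA : IsUDA κA k (pureState ψ))
    (β : Matrix (Idx κB) (Idx κB) ℂ) (hβ : IsDensity β)
    (hβUDA : IsUDA κB k β) :
    IsUDA (fun i => κA i × κB i) k (kronProd (pureState ψ) β) := by
  intro σ hσ hmarg
  have hA : traceB σ = pureState ψ := hαUDA _ hσ.traceB fun S hS => by
    rw [ptrace_traceB, hmarg S hS, ← ptrace_traceB, traceB_kronProd, hβ.2, one_smul]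
  obtain ⟨τ, hτ, rfl⟩ := exists_eq_kronProd_of_traceB_eq_pureState hσ hψ hA
  have hψS_ne : ∀ S, ptrace κA S (pureState ψ) ≠ 0 := fun S h0 => by
    simpa [h0] using (trace_ptrace κA S (pureState ψ)).trans hψ
  rw [hβUDA τ hτ fun S hS => kronProd_right_injective (hψS_ne S) ?_]
  rw [← ptrace_kronProd, ← ptrace_kronProd, hmarg S hS]
end

section
/- Mixed-k additivity with one pure factor: suppose α = |ψ⟩⟨ψ| is a pure k₁-UDA state on ⊗_{i=1}^m H_{A_i} and β is a k₂-UDA state on ⊗_{i=1}^n H_{B_i}. Let k = max{k₁, k₂} and assume k ≤ m and k ≤ n. Then α ⊗ β is k-UDA as an (m+n)-partite state. -/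
open scoped BigOperators ComplexOrder

instance sumElimFintype {ι₁ ι₂ : Type} {κ₁ : ι₁ → Type} {κ₂ : ι₂ → Type}
    [∀ i, Fintype (κ₁ i)] [∀ i, Fintype (κ₂ i)] :
    ∀ i, Fintype (Sum.elim κ₁ κ₂ i)
  | .inl i => inferInstanceAs (Fintype (κ₁ i))
  | .inr i => inferInstanceAs (Fintype (κ₂ i))

def tensProd {ι₁ ι₂ : Type} {κ₁ : ι₁ → Type} {κ₂ : ι₂ → Type}
    (ρ : Matrix (Idx κ₁) (Idx κ₁) ℂ) (σ : Matrix (Idx κ₂) (Idx κ₂) ℂ) :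
    Matrix (Idx (Sum.elim κ₁ κ₂)) (Idx (Sum.elim κ₁ κ₂)) ℂ :=
  fun a b => ρ (fun i => a (.inl i)) (fun i => b (.inl i)) *
             σ (fun i => a (.inr i)) (fun i => b (.inr i))

/-!
Let `σ` be a state with the same `k`-marginals as `|ψ⟩⟨ψ| ⊗ β`, where `k = max k₁ k₂`. Since
`k`-marginals determine all smaller marginals, both UDA hypotheses hold at level `k`. Tracing out
one factor commutes with taking marginals, so the reduced states `σ_A = margLeft σ` and
`σ_B = margRight σ` have the `k`-marginals of `|ψ⟩⟨ψ|` and `β`, hence equal them.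

A state whose reduced state `σ_A` is pure is a product: write `σ = Bᴴ B` and reshape `B` to a
matrix `C` whose columns are indexed by the first factor, so that `Cᴴ C = σ_A = P := |ψ⟩⟨ψ|`.
Then `C (1 - P)` has Gram matrix `(1 - P) P (1 - P) = 0`, so `C = C P`: every row of `C` is a
multiple of `ψ*`, and `σ = |ψ⟩⟨ψ| ⊗ σ_B = |ψ⟩⟨ψ| ⊗ β`.
-/

open scoped Matrix

theorem Matrix.PosSemidef.exists_eq_conjTranspose_mul_self {n 𝕜 : Type*} [Fintype n] [RCLike 𝕜]
    {A : Matrix n n 𝕜} (hA : A.PosSemidef) : ∃ B : Matrix n n 𝕜, A = Bᴴ * B := by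
  classical
  open scoped MatrixOrder in
  exact CStarAlgebra.nonneg_iff_eq_star_mul_self.mp hA.nonneg

theorem Matrix.eq_vecMulVec_of_conjTranspose_mul_self_eq {m n R : Type*} [Fintype m] [Fintype n]
    [Ring R] [PartialOrder R] [StarRing R] [StarOrderedRing R] [NoZeroDivisors R]
    {C : Matrix m n R} {ψ : n → R} (hψ : star ψ ⬝ᵥ ψ = 1)
    (hC : Cᴴ * C = vecMulVec ψ (star ψ)) : C = vecMulVec (C *ᵥ ψ) (star ψ) := by
  classical
  set P := vecMulVec ψ (star ψ)
  have hPP : P * P = P := by rw [vecMulVec_mul_vecMulVec, hψ, one_smul]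
  have hPH : Pᴴ = P := by rw [conjTranspose_vecMulVec, star_star]
  have h : (C * (1 - P))ᴴ * (C * (1 - P)) = 0 :=
    calc (C * (1 - P))ᴴ * (C * (1 - P)) = (1 - P) * (Cᴴ * C) * (1 - P) := by
          simp only [conjTranspose_mul, conjTranspose_sub, conjTranspose_one, hPH, Matrix.mul_assoc]
      _ = 0 := by rw [hC, Matrix.sub_mul, Matrix.one_mul, hPP, sub_self, Matrix.zero_mul]
  rw [conjTranspose_mul_self_eq_zero, Matrix.mul_sub, Matrix.mul_one, sub_eq_zero] at h
  rwa [← mul_vecMulVec]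

theorem trace_pureState {α : Type} [Fintype α] (ψ : α → ℂ) :
    (pureState ψ).trace = ∑ a, ψ a * star (ψ a) :=
  rfl

section PartialTrace

variable {ι : Type} [Fintype ι] [DecidableEq ι] (κ : ι → Type) [∀ i, Fintype (κ i)]

def complSplitEquiv {T T' : Finset ι} (hTT : T ⊆ T') :
    (∀ i : {i // i ∉ T}, κ i) ≃ (∀ i : {i // i ∈ T' \ T}, κ i) × (∀ i : {i // i ∉ T'}, κ i) where
  toFun c := (fun i => c ⟨i, (Finset.mem_sdiff.mp i.2).2⟩, fun i => c ⟨i, fun h => i.2 (hTT h)⟩)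
  invFun dc i := if h : i.1 ∈ T' then dc.1 ⟨i, Finset.mem_sdiff.mpr ⟨h, i.2⟩⟩ else dc.2 ⟨i, h⟩
  left_inv c := by funext i; dsimp only; split <;> rfl
  right_inv dc := by
    refine Prod.ext ?_ ?_ <;> funext i <;> dsimp only
    · rw [dif_pos (Finset.mem_sdiff.mp i.2).1]
    · rw [dif_neg i.2]

def extendPi {T T' : Finset ι} (a : ∀ i : {i // i ∈ T}, κ i)
    (d : ∀ i : {i // i ∈ T' \ T}, κ i) : ∀ i : {i // i ∈ T'}, κ i :=
  fun i => if h : i.1 ∈ T then a ⟨i, h⟩ else d ⟨i, Finset.mem_sdiff.mpr ⟨i.2, h⟩⟩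

theorem ptrace_eq_sum_ptrace_of_subset {T T' : Finset ι} (hTT : T ⊆ T')
    (M : Matrix (Idx κ) (Idx κ) ℂ) (a b : ∀ i : {i // i ∈ T}, κ i) :
    ptrace κ T M a b =
      ∑ d : ∀ i : {i // i ∈ T' \ T}, κ i, ptrace κ T' M (extendPi κ a d) (extendPi κ b d) := by
  rw [ptrace, ← (complSplitEquiv κ hTT).symm.sum_comp, Fintype.sum_prod_type]
  refine Fintype.sum_congr _ _ fun d => Fintype.sum_congr _ _ fun c => ?_
  congr 1 <;> funext i
  all_goals
    by_cases hT' : i ∈ T'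
    · by_cases hT : i ∈ T <;> simp [complSplitEquiv, extendPi, hT, hT']
    · simp [complSplitEquiv, hT', mt (@hTT i) hT']

theorem ptrace_eq_of_subset {T T' : Finset ι} (hTT : T ⊆ T') {M N : Matrix (Idx κ) (Idx κ) ℂ}
    (h : ptrace κ T' M = ptrace κ T' N) : ptrace κ T M = ptrace κ T N := by
  ext a b
  rw [ptrace_eq_sum_ptrace_of_subset κ hTT, ptrace_eq_sum_ptrace_of_subset κ hTT, h]

variable {κ} in
theorem IsUDA.mono {k k' : ℕ} {ρ : Matrix (Idx κ) (Idx κ) ℂ} (hρ : IsUDA κ k ρ) (hk : k ≤ k')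
    (hk' : k' ≤ Fintype.card ι) : IsUDA κ k' ρ := by
  intro σ hσ hmarg
  refine hρ σ hσ fun S hS => ?_
  obtain ⟨S', hSS', hS'⟩ := Finset.exists_superset_card_eq (hS ▸ hk) hk'
  exact ptrace_eq_of_subset κ hSS' (hmarg S' hS')

end PartialTrace

section Bipartite

variable {ι₁ ι₂ : Type} {κ₁ : ι₁ → Type} {κ₂ : ι₂ → Type}

def glue (a : Idx κ₁) (b : Idx κ₂) : Idx (Sum.elim κ₁ κ₂) :=
  Equiv.prodPiEquivSumPi κ₁ κ₂ (a, b)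

@[simp] theorem glue_inl (a : Idx κ₁) (b : Idx κ₂) (j : ι₁) : glue a b (.inl j) = a j := rfl

@[simp] theorem glue_inr (a : Idx κ₁) (b : Idx κ₂) (j : ι₂) : glue a b (.inr j) = b j := rfl

theorem ext_glue {α : Type*} {M N : Matrix (Idx (Sum.elim κ₁ κ₂)) (Idx (Sum.elim κ₁ κ₂)) α}
    (h : ∀ a a' b b', M (glue a b) (glue a' b') = N (glue a b) (glue a' b')) : M = N := by
  ext x y
  obtain ⟨⟨a, b⟩, rfl⟩ := (Equiv.prodPiEquivSumPi κ₁ κ₂).surjective x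
  obtain ⟨⟨a', b'⟩, rfl⟩ := (Equiv.prodPiEquivSumPi κ₁ κ₂).surjective y
  exact h a a' b b'

theorem tensProd_glue (ρ : Matrix (Idx κ₁) (Idx κ₁) ℂ) (τ : Matrix (Idx κ₂) (Idx κ₂) ℂ)
    (a a' : Idx κ₁) (b b' : Idx κ₂) : tensProd ρ τ (glue a b) (glue a' b') = ρ a a' * τ b b' :=
  rfl

def swapIdx (x : Idx (Sum.elim κ₂ κ₁)) : Idx (Sum.elim κ₁ κ₂) :=
  glue (fun j => x (.inr j)) (fun j => x (.inl j))

def reshapeLeft {m α : Type*} (B : Matrix m (Idx (Sum.elim κ₁ κ₂)) α) :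
    Matrix (m × Idx κ₂) (Idx κ₁) α :=
  Matrix.of fun p a => B p.1 (glue a p.2)

theorem conjTranspose_mul_self_eq_tensProd {m : Type} [Fintype m]
    {B : Matrix m (Idx (Sum.elim κ₁ κ₂)) ℂ} {D : Matrix m (Idx κ₂) ℂ} {ψ : Idx κ₁ → ℂ}
    (hB : ∀ t a b, B t (glue a b) = D t b * star (ψ a)) :
    Bᴴ * B = tensProd (pureState ψ) (Dᴴ * D) := by
  refine ext_glue fun a a' b b' => ?_
  rw [tensProd_glue]
  simp only [Matrix.mul_apply, Matrix.conjTranspose_apply, hB, pureState, Finset.mul_sum,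
    star_mul, star_star]
  exact Fintype.sum_congr _ _ fun t => by ring

section

variable [Fintype ι₂] [DecidableEq ι₂] [∀ i, Fintype (κ₂ i)]

noncomputable def margLeft (M : Matrix (Idx (Sum.elim κ₁ κ₂)) (Idx (Sum.elim κ₁ κ₂)) ℂ) :
    Matrix (Idx κ₁) (Idx κ₁) ℂ :=
  fun a a' => ∑ b, M (glue a b) (glue a' b)

theorem margLeft_tensProd (ρ : Matrix (Idx κ₁) (Idx κ₁) ℂ) {τ : Matrix (Idx κ₂) (Idx κ₂) ℂ}
    (hτ : τ.trace = 1) : margLeft (tensProd ρ τ) = ρ := by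
  ext a a'
  simp only [margLeft, tensProd_glue, ← Finset.mul_sum]
  rw [show ∑ b, τ b b = 1 from hτ, mul_one]

theorem margLeft_conjTranspose_mul_self {m : Type} [Fintype m]
    (B : Matrix m (Idx (Sum.elim κ₁ κ₂)) ℂ) :
    margLeft (Bᴴ * B) = (reshapeLeft B)ᴴ * reshapeLeft B := by
  ext a a'
  rw [Matrix.mul_apply, Fintype.sum_prod_type, Finset.sum_comm]
  rfl

end

section

variable [Fintype ι₁] [DecidableEq ι₁] [∀ i, Fintype (κ₁ i)]

noncomputable def margRight (M : Matrix (Idx (Sum.elim κ₁ κ₂)) (Idx (Sum.elim κ₁ κ₂)) ℂ) :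
    Matrix (Idx κ₂) (Idx κ₂) ℂ :=
  fun b b' => ∑ a, M (glue a b) (glue a b')

theorem margRight_tensProd {ρ : Matrix (Idx κ₁) (Idx κ₁) ℂ} (hρ : ρ.trace = 1)
    (τ : Matrix (Idx κ₂) (Idx κ₂) ℂ) : margRight (tensProd ρ τ) = τ := by
  ext b b'
  simp only [margRight, tensProd_glue, ← Finset.sum_mul]
  rw [show ∑ a, ρ a a = 1 from hρ, one_mul]

theorem margRight_eq_margLeft_submatrix
    (M : Matrix (Idx (Sum.elim κ₁ κ₂)) (Idx (Sum.elim κ₁ κ₂)) ℂ) :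
    margRight M = margLeft (M.submatrix swapIdx swapIdx) :=
  rfl

end

variable [Fintype ι₁] [DecidableEq ι₁] [∀ i, Fintype (κ₁ i)]
variable [Fintype ι₂] [DecidableEq ι₂] [∀ i, Fintype (κ₂ i)]

theorem trace_margLeft (M : Matrix (Idx (Sum.elim κ₁ κ₂)) (Idx (Sum.elim κ₁ κ₂)) ℂ) :
    (margLeft M).trace = M.trace := by
  rw [Matrix.trace, Matrix.trace, ← (Equiv.prodPiEquivSumPi κ₁ κ₂).sum_comp,
    Fintype.sum_prod_type]
  rfl

theorem trace_margRight (M : Matrix (Idx (Sum.elim κ₁ κ₂)) (Idx (Sum.elim κ₁ κ₂)) ℂ) :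
    (margRight M).trace = M.trace := by
  rw [Matrix.trace, Matrix.trace, ← (Equiv.prodPiEquivSumPi κ₁ κ₂).sum_comp,
    Fintype.sum_prod_type, Finset.sum_comm]
  rfl

theorem margLeft_posSemidef {M : Matrix (Idx (Sum.elim κ₁ κ₂)) (Idx (Sum.elim κ₁ κ₂)) ℂ}
    (hM : M.PosSemidef) : (margLeft M).PosSemidef := by
  obtain ⟨B, rfl⟩ := hM.exists_eq_conjTranspose_mul_self
  rw [margLeft_conjTranspose_mul_self]
  exact Matrix.posSemidef_conjTranspose_mul_self _

theorem margRight_posSemidef {M : Matrix (Idx (Sum.elim κ₁ κ₂)) (Idx (Sum.elim κ₁ κ₂)) ℂ}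
    (hM : M.PosSemidef) : (margRight M).PosSemidef :=
  margRight_eq_margLeft_submatrix M ▸ margLeft_posSemidef (hM.submatrix swapIdx)

theorem eq_tensProd_of_margLeft_eq_pureState {ψ : Idx κ₁ → ℂ} (hψ : ∑ a, ψ a * star (ψ a) = 1)
    {σ : Matrix (Idx (Sum.elim κ₁ κ₂)) (Idx (Sum.elim κ₁ κ₂)) ℂ} (hσ : σ.PosSemidef)
    (hσA : margLeft σ = pureState ψ) : σ = tensProd (pureState ψ) (margRight σ) := by
  obtain ⟨B, rfl⟩ := hσ.exists_eq_conjTranspose_mul_self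
  have hC : reshapeLeft B = Matrix.vecMulVec (reshapeLeft B *ᵥ ψ) (star ψ) :=
    Matrix.eq_vecMulVec_of_conjTranspose_mul_self_eq ((dotProduct_comm _ _).trans hψ)
      (by rw [← margLeft_conjTranspose_mul_self, hσA]; rfl)
  set D : Matrix (Idx (Sum.elim κ₁ κ₂)) (Idx κ₂) ℂ := Matrix.of fun t b => (reshapeLeft B *ᵥ ψ) (t, b)
  rw [conjTranspose_mul_self_eq_tensProd (D := D) fun t a b => congrFun (congrFun hC (t, b)) a,
    margRight_tensProd ((trace_pureState ψ).trans hψ)]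

open Function (Embedding)

def liftLeft (T : Finset ι₁) (a : ∀ j : {j // j ∈ T}, κ₁ j) :
    ∀ i : {i // i ∈ T.map (Embedding.inl (β := ι₂))}, Sum.elim κ₁ κ₂ i
  | ⟨.inl j, h⟩ => a ⟨j, by simpa using h⟩
  | ⟨.inr _, h⟩ => absurd h (by simp)

def complMapInlEquiv (T : Finset ι₁) :
    (∀ j : {j // j ∉ T}, κ₁ j) × Idx κ₂ ≃
      ∀ i : {i // i ∉ T.map (Embedding.inl (β := ι₂))}, Sum.elim κ₁ κ₂ i where
  toFun p
    | ⟨.inl j, h⟩ => p.1 ⟨j, by simpa using h⟩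
    | ⟨.inr j, _⟩ => p.2 j
  invFun c := (fun j => c ⟨.inl j, by simpa using j.2⟩, fun j => c ⟨.inr j, by simp⟩)
  left_inv p := rfl
  right_inv c := by ext ⟨i | i, hi⟩ <;> rfl

theorem ptrace_margLeft (T : Finset ι₁)
    (M : Matrix (Idx (Sum.elim κ₁ κ₂)) (Idx (Sum.elim κ₁ κ₂)) ℂ) :
    ptrace κ₁ T (margLeft M) =
      (ptrace (Sum.elim κ₁ κ₂) (T.map Embedding.inl) M).submatrix (liftLeft T) (liftLeft T) := by
  ext a a'
  rw [Matrix.submatrix_apply, ptrace, ptrace, ← (complMapInlEquiv T).sum_comp,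
    Fintype.sum_prod_type]
  refine Fintype.sum_congr _ _ fun c => Fintype.sum_congr _ _ fun b => ?_
  congr 1 <;> ext (j | j) <;> simp [liftLeft, complMapInlEquiv]

def liftRight (T : Finset ι₂) (b : ∀ j : {j // j ∈ T}, κ₂ j) :
    ∀ i : {i // i ∈ T.map (Embedding.inr (α := ι₁))}, Sum.elim κ₁ κ₂ i
  | ⟨.inl _, h⟩ => absurd h (by simp)
  | ⟨.inr j, h⟩ => b ⟨j, by simpa using h⟩

def complMapInrEquiv (T : Finset ι₂) :
    Idx κ₁ × (∀ j : {j // j ∉ T}, κ₂ j) ≃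
      ∀ i : {i // i ∉ T.map (Embedding.inr (α := ι₁))}, Sum.elim κ₁ κ₂ i where
  toFun p
    | ⟨.inl j, _⟩ => p.1 j
    | ⟨.inr j, h⟩ => p.2 ⟨j, by simpa using h⟩
  invFun c := (fun j => c ⟨.inl j, by simp⟩, fun j => c ⟨.inr j, by simpa using j.2⟩)
  left_inv p := rfl
  right_inv c := by ext ⟨i | i, hi⟩ <;> rfl

theorem ptrace_margRight (T : Finset ι₂)
    (M : Matrix (Idx (Sum.elim κ₁ κ₂)) (Idx (Sum.elim κ₁ κ₂)) ℂ) :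
    ptrace κ₂ T (margRight M) =
      (ptrace (Sum.elim κ₁ κ₂) (T.map Embedding.inr) M).submatrix (liftRight T) (liftRight T) := by
  ext b b'
  rw [Matrix.submatrix_apply, ptrace, ptrace, ← (complMapInrEquiv T).sum_comp,
    Fintype.sum_prod_type, Finset.sum_comm]
  refine Fintype.sum_congr _ _ fun c => Fintype.sum_congr _ _ fun a => ?_
  congr 1 <;> ext (j | j) <;> simp [liftRight, complMapInrEquiv]

theorem IsUDA.tensProd_pureState {k : ℕ} {ψ : Idx κ₁ → ℂ} (hψ : ∑ a, ψ a * star (ψ a) = 1)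
    (hα : IsUDA κ₁ k (pureState ψ)) {β : Matrix (Idx κ₂) (Idx κ₂) ℂ} (hβ : β.trace = 1)
    (hβUDA : IsUDA κ₂ k β) : IsUDA (Sum.elim κ₁ κ₂) k (tensProd (pureState ψ) β) := by
  intro σ hσ hmarg
  have hσA : margLeft σ = pureState ψ := by
    refine hα _ ⟨margLeft_posSemidef hσ.1, (trace_margLeft σ).trans hσ.2⟩ fun T hT => ?_
    rw [ptrace_margLeft, hmarg _ (by rw [Finset.card_map, hT]), ← ptrace_margLeft,
      margLeft_tensProd _ hβ]
  have hσB : margRight σ = β := by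
    refine hβUDA _ ⟨margRight_posSemidef hσ.1, (trace_margRight σ).trans hσ.2⟩ fun T hT => ?_
    rw [ptrace_margRight, hmarg _ (by rw [Finset.card_map, hT]), ← ptrace_margRight,
      margRight_tensProd ((trace_pureState ψ).trans hψ)]
  rw [eq_tensProd_of_margLeft_eq_pureState hψ hσ.1 hσA, hσB]

end Bipartite

theorem mixed_k_additivity_pure_factor {m n : ℕ}
    (κA : Fin m → Type) (κB : Fin n → Type)
    [∀ i, Fintype (κA i)] [∀ i, Fintype (κB i)] (k₁ k₂ : ℕ)
    (hkm : max k₁ k₂ ≤ m) (hkn : max k₁ k₂ ≤ n)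
    (ψ : Idx κA → ℂ) (hψ : ∑ a, ψ a * star (ψ a) = 1)
    (hαUDA : IsUDA κA k₁ (pureState ψ))
    (β : Matrix (Idx κB) (Idx κB) ℂ) (hβ : IsDensity β)
    (hβUDA : IsUDA κB k₂ β) :
    IsUDA (Sum.elim κA κB) (max k₁ k₂) (tensProd (pureState ψ) β) :=
  (hαUDA.mono (le_max_left k₁ k₂) (by simpa using hkm)).tensProd_pureState hψ hβ.2
    (hβUDA.mono (le_max_right k₁ k₂) (by simpa using hkn))
end
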